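/- arXiv:2511.00864 — 2 statements merged into one kernel-verified Lean document; each statement's English description precedes it below -/
import Mathlib

section
/- Let (X, G) be a CR-dynamical system. If x ∈ X and x ∉ trans_2(G), then the equivalence class [x]_G is not dense in X. Consequently, for any x ∈ X, if [x]_G is dense in X then [x]_G ⊆ trans_2(G). -/
open Set Topology

variable {X : Type*}

/-- `GPow G n x` : the set of endpoints of `G`-paths of length `n` starting at `x`,
i.e. `G^n(x)`. -/
def GPow (G : Set (X × X)) (n : ℕ) (x : X) : Set X :=
  {y | ∃ p : ℕ → X, p 0 = x ∧ p n = y ∧ ∀ i < n, (p i, p (i + 1)) ∈ G}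

/-- `u` is a trajectory of `x` in `(X, G)`. -/
def IsTraj (G : Set (X × X)) (x : X) (u : ℕ → X) : Prop :=
  u 0 = x ∧ ∀ n : ℕ, (u n, u (n + 1)) ∈ G

/-- `x` is a legal point: it admits a trajectory. -/
def Legal (G : Set (X × X)) (x : X) : Prop := ∃ u : ℕ → X, IsTraj G x u

/-- The inverse relation `G⁻¹`. -/
def Ginv (G : Set (X × X)) : Set (X × X) := {p | (p.2, p.1) ∈ G}

/-- `T_G(x)* = ⋃ₙ G^n(x)`. -/
def TStar (G : Set (X × X)) (x : X) : Set X := ⋃ n : ℕ, GPow G n x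

/-- The set of `0`-transitive points. -/
def trans0 [TopologicalSpace X] (G : Set (X × X)) : Set X :=
  {x | Legal G x ∧ ∀ U : Set X, IsOpen U → U.Nonempty → ∃ n : ℕ, GPow G n x ⊆ U}

/-- The set of `1`-transitive points. -/
def trans1 [TopologicalSpace X] (G : Set (X × X)) : Set X :=
  {x | Legal G x ∧ ∀ u : ℕ → X, IsTraj G x u → Dense (Set.range u)}

/-- The set of `2`-transitive points. -/
def trans2 [TopologicalSpace X] (G : Set (X × X)) : Set X :=
  {x | ∃ u : ℕ → X, IsTraj G x u ∧ Dense (Set.range u)}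

/-- The set of `3`-transitive points. -/
def trans3 [TopologicalSpace X] (G : Set (X × X)) : Set X :=
  {x | Legal G x ∧ Dense (⋃ u ∈ {u : ℕ → X | IsTraj G x u}, Set.range u)}

/-- The `∼_G`-equivalence class of `x`: `[x]_G = {y : y ∈ T_G(x)* ∧ x ∈ T_G(y)*}`. -/
def eqClass (G : Set (X × X)) (x : X) : Set X :=
  {y | y ∈ TStar G x ∧ x ∈ TStar G y}

private lemma gpow_zero {G : Set (X × X)} {x y : X} (h : y ∈ GPow G 0 x) : y = x := by
  obtain ⟨p, h0, hn, _⟩ := h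
  rw [← hn, h0]

private lemma path_concat {G : Set (X × X)} (n m : ℕ) (p q : ℕ → X)
    (hpq : p n = q 0) (hpe : ∀ i < n, (p i, p (i+1)) ∈ G)
    (hqe : ∀ i < m, (q i, q (i+1)) ∈ G) :
    ∃ r : ℕ → X, (∀ i ≤ n, r i = p i) ∧ (∀ j ≤ m, r (n + j) = q j) ∧
      ∀ i < n + m, (r i, r (i+1)) ∈ G := by
  refine ⟨fun i => if i ≤ n then p i else q (i - n), fun i hi => if_pos hi, ?_, ?_⟩
  · intro j hj
    rcases Nat.eq_zero_or_pos j with h0 | h0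
    · subst h0; simp [hpq]
    · have hnn : ¬ (n + j ≤ n) := by omega
      simp only [hnn, if_false]
      congr 1
      omega
  · intro i hi
    have hval : ∀ i', n ≤ i' → (if i' ≤ n then p i' else q (i' - n)) = q (i' - n) := by
      intro i' h
      by_cases hin : i' ≤ n
      · have : i' = n := le_antisymm hin h
        subst this
        simp [hpq]
      · rw [if_neg hin]
    rcases lt_or_ge i n with h | h
    · have h1 : i ≤ n := h.le
      have h2 : i + 1 ≤ n := h
      simp only [if_pos h1, if_pos h2]
      exact hpe i h
    · simp only [hval i h, hval (i+1) (by omega)]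
      have he : i + 1 - n = (i - n) + 1 := by omega
      rw [he]
      exact hqe (i - n) (by omega)

private lemma gpow_concat {G : Set (X × X)} {x z w : X} {n m : ℕ}
    (hz : z ∈ GPow G n x) (hw : w ∈ GPow G m z) : w ∈ GPow G (n + m) x := by
  obtain ⟨p, hp0, hpn, hpe⟩ := hz
  obtain ⟨q, hq0, hqm, hqe⟩ := hw
  obtain ⟨r, hr1, hr2, hre⟩ := path_concat n m p q (by rw [hpn, hq0]) hpe hqe
  exact ⟨r, by rw [hr1 0 (Nat.zero_le _), hp0], by rw [hr2 m le_rfl, hqm], hre⟩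

private lemma tstar_trans {G : Set (X × X)} {x z w : X}
    (hz : z ∈ TStar G x) (hw : w ∈ TStar G z) : w ∈ TStar G x := by
  obtain ⟨n, hn⟩ := Set.mem_iUnion.1 hz
  obtain ⟨m, hm⟩ := Set.mem_iUnion.1 hw
  exact Set.mem_iUnion.2 ⟨n + m, gpow_concat hn hm⟩

private lemma self_mem_tstar (G : Set (X × X)) (x : X) : x ∈ TStar G x :=
  Set.mem_iUnion.2 ⟨0, fun _ => x, rfl, rfl, fun i hi => absurd hi (Nat.not_lt_zero i)⟩

private lemma eqClass_eq {G : Set (X × X)} {x y : X} (hy : y ∈ eqClass G x) :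
    eqClass G y = eqClass G x := by
  obtain ⟨h1, h2⟩ := hy
  ext z
  constructor
  · rintro ⟨hz1, hz2⟩
    exact ⟨tstar_trans h1 hz1, tstar_trans hz2 h2⟩
  · rintro ⟨hz1, hz2⟩
    exact ⟨tstar_trans h2 hz1, tstar_trans hz2 h1⟩

private def Ssum (L : ℕ → ℕ) (k : ℕ) : ℕ := ∑ i ∈ Finset.range k, L i

private lemma Ssum_zero (L : ℕ → ℕ) : Ssum L 0 = 0 := by simp [Ssum]

private lemma Ssum_succ (L : ℕ → ℕ) (k : ℕ) : Ssum L (k+1) = Ssum L k + L k :=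
  Finset.sum_range_succ L k

private lemma Ssum_mono (L : ℕ → ℕ) : Monotone (Ssum L) := fun _ _ h =>
  Finset.sum_le_sum_of_subset (Finset.range_subset_range.2 h)

private lemma le_Ssum (L : ℕ → ℕ) (hL : ∀ k, 1 ≤ L k) (k : ℕ) : k ≤ Ssum L k := by
  induction k with
  | zero => omega
  | succ k ih => have := hL k; rw [Ssum_succ]; omega

private def Kidx (L : ℕ → ℕ) (t : ℕ) : ℕ := Nat.findGreatest (fun k => Ssum L k ≤ t) t

private lemma Kidx_spec1 (L : ℕ → ℕ) (t : ℕ) : Ssum L (Kidx L t) ≤ t :=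
  Nat.findGreatest_spec (P := fun k => Ssum L k ≤ t) (Nat.zero_le t)
    (show Ssum L 0 ≤ t by rw [Ssum_zero]; omega)

private lemma Kidx_spec2 (L : ℕ → ℕ) (hL : ∀ k, 1 ≤ L k) (t : ℕ) :
    t < Ssum L (Kidx L t + 1) := by
  by_contra h
  push_neg at h
  have h1 : Kidx L t + 1 ≤ t := le_trans (le_Ssum L hL _) h
  have h2 : Kidx L t + 1 ≤ Kidx L t := Nat.le_findGreatest h1 h
  omega

private lemma Kidx_eq (L : ℕ → ℕ) (hL : ∀ k, 1 ≤ L k) {t k : ℕ}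
    (h1 : Ssum L k ≤ t) (h2 : t < Ssum L (k+1)) : Kidx L t = k := by
  have hle : k ≤ Kidx L t := Nat.le_findGreatest (le_trans (le_Ssum L hL k) h1) h1
  have hge : Kidx L t ≤ k := by
    by_contra h
    push_neg at h
    have hs := Kidx_spec1 L t
    have : Ssum L (k+1) ≤ Ssum L (Kidx L t) := Ssum_mono L (by omega)
    omega
  omega

private def uSeq (L : ℕ → ℕ) (P : ℕ → ℕ → X) (t : ℕ) : X :=
  P (Kidx L t) (t - Ssum L (Kidx L t))

private lemma uSeq_def (L : ℕ → ℕ) (P : ℕ → ℕ → X) (t : ℕ) :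
    uSeq L P t = P (Kidx L t) (t - Ssum L (Kidx L t)) := rfl

private lemma concat_traj {G : Set (X × X)} {x : X} (L : ℕ → ℕ) (P : ℕ → ℕ → X)
    (hL : ∀ k, 1 ≤ L k) (hP0 : ∀ k, P k 0 = x) (hPL : ∀ k, P k (L k) = x)
    (hPe : ∀ k, ∀ i < L k, (P k i, P k (i+1)) ∈ G) :
    ∃ u : ℕ → X, IsTraj G x u ∧ ∀ k j, j < L k → P k j ∈ Set.range u := by
  refine ⟨uSeq L P, ⟨?_, ?_⟩, ?_⟩
  · have hk0 : Kidx L 0 = 0 := by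
      apply Kidx_eq L hL
      · rw [Ssum_zero]
      · rw [Ssum_succ, Ssum_zero]; have := hL 0; omega
    rw [uSeq_def, hk0, Ssum_zero]
    exact hP0 0
  · intro t
    have h1 := Kidx_spec1 L t
    have h2 := Kidx_spec2 L hL t
    set k := Kidx L t with hk
    rw [Ssum_succ] at h2
    by_cases hc : t + 1 < Ssum L k + L k
    · have hk' : Kidx L (t+1) = k :=
        Kidx_eq L hL (le_trans h1 (Nat.le_succ t)) (by rw [Ssum_succ]; exact hc)
      rw [uSeq_def, uSeq_def, hk', ← hk]
      have he : t + 1 - Ssum L k = (t - Ssum L k) + 1 := by omega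
      rw [he]
      exact hPe k _ (by omega)
    · have ht1 : t + 1 = Ssum L k + L k := by omega
      have hk' : Kidx L (t+1) = k + 1 := by
        apply Kidx_eq L hL
        · rw [Ssum_succ]; omega
        · rw [Ssum_succ, Ssum_succ]
          have := hL (k+1); omega
      rw [uSeq_def, uSeq_def, hk', ← hk]
      have e1 : t + 1 - Ssum L (k+1) = 0 := by rw [Ssum_succ]; omega
      rw [e1, hP0]
      have e2 : t - Ssum L k = L k - 1 := by omega
      rw [e2]
      have hedge := hPe k (L k - 1) (by have := hL k; omega)
      have e3 : L k - 1 + 1 = L k := by have := hL k; omega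
      rw [e3, hPL k] at hedge
      exact hedge
  · intro k j hj
    refine ⟨Ssum L k + j, ?_⟩
    have hk' : Kidx L (Ssum L k + j) = k :=
      Kidx_eq L hL (Nat.le_add_right _ _) (by rw [Ssum_succ]; omega)
    rw [uSeq_def, hk']
    congr 1
    omega

private lemma dense_class_trans2 [MetricSpace X] [CompactSpace X]
    (G : Set (X × X)) (hGne : G.Nonempty) (x : X)
    (hd : Dense (eqClass G x)) : x ∈ trans2 G := by
  by_cases hA : ∀ y ∈ eqClass G x, y = x
  · have hEq : eqClass G x = {x} := Set.Subset.antisymm (fun y hy => hA y hy)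
      (by intro y hy
          rw [show y = x from hy]
          exact ⟨self_mem_tstar G x, self_mem_tstar G x⟩)
    rw [hEq] at hd
    have hall : ∀ z : X, z = x := by
      intro z
      have hz := hd z
      rwa [closure_singleton, Set.mem_singleton_iff] at hz
    obtain ⟨g, hg⟩ := hGne
    have hgx : (x, x) ∈ G := by
      have hg' : (g.1, g.2) ∈ G := by rwa [Prod.mk.eta]
      rwa [hall g.1, hall g.2] at hg'
    refine ⟨fun _ => x, ⟨rfl, fun _ => hgx⟩, ?_⟩
    rw [Set.range_const]
    exact hd
  · push_neg at hA
    obtain ⟨y₀, hy₀, hy₀x⟩ := hA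
    obtain ⟨a, pA⟩ := Set.mem_iUnion.1 hy₀.1
    obtain ⟨b, pB⟩ := Set.mem_iUnion.1 hy₀.2
    have hab : 1 ≤ a + b := by
      rcases Nat.eq_zero_or_pos a with rfl | h0
      · exact absurd (gpow_zero pA) hy₀x
      · omega
    have hloop : x ∈ GPow G (a + b) x := gpow_concat pA pB
    have : Nonempty X := ⟨x⟩
    obtain ⟨q, hq⟩ : ∃ q : ℕ → X, DenseRange q :=
      ⟨TopologicalSpace.denseSeq X, TopologicalSpace.denseRange_denseSeq X⟩
    set e : ℕ ≃ ℕ × ℕ := (Denumerable.eqv (ℕ × ℕ)).symm with he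
    have hsel : ∀ k : ℕ, ∃ y, y ∈ eqClass G x ∧
        dist (q (e k).1) y < 1 / ((e k).2 + 1) := by
      intro k
      have hpos : (0:ℝ) < 1 / (((e k).2 : ℝ) + 1) := by positivity
      obtain ⟨y, hyb, hys⟩ := Metric.dense_iff.1 hd (q (e k).1) _ hpos
      exact ⟨y, hys, by rw [dist_comm]; exact Metric.mem_ball.1 hyb⟩
    choose y hymem hydist using hsel
    have hloops : ∀ k : ℕ, ∃ (Lp : ℕ × (ℕ → X)) (j : ℕ),
        Lp.2 0 = x ∧ Lp.2 Lp.1 = x ∧ (∀ i < Lp.1, (Lp.2 i, Lp.2 (i+1)) ∈ G) ∧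
        j < Lp.1 ∧ Lp.2 j = y k := by
      intro k
      obtain ⟨n, pn, hn0, hnn, hne⟩ := Set.mem_iUnion.1 (hymem k).1
      obtain ⟨m, pm, hm0, hmm, hme⟩ := Set.mem_iUnion.1 (hymem k).2
      obtain ⟨pc, hc0, hcc, hce⟩ := hloop
      obtain ⟨r1, hr11, hr12, hr1e⟩ := path_concat n m pn pm (by rw [hnn, hm0]) hne hme
      obtain ⟨r2, hr21, hr22, hr2e⟩ := path_concat (n + m) (a + b) r1 pc
        (by rw [hr12 m le_rfl, hmm, hc0]) hr1e hce
      refine ⟨(n + m + (a + b), r2), n, ?_, ?_, hr2e, by omega, ?_⟩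
      · show r2 0 = x
        rw [hr21 0 (Nat.zero_le _), hr11 0 (Nat.zero_le _), hn0]
      · show r2 (n + m + (a + b)) = x
        rw [hr22 (a+b) le_rfl, hcc]
      · show r2 n = y k
        rw [hr21 n (by omega), hr11 n le_rfl, hnn]
    choose Lp J hP0 hPL hPe hJL hPJ using hloops
    set L : ℕ → ℕ := fun k => (Lp k).1 with hLdef
    set P : ℕ → ℕ → X := fun k => (Lp k).2 with hPdef
    have hL1 : ∀ k, 1 ≤ L k := fun k => Nat.lt_of_le_of_lt (Nat.zero_le _) (hJL k)
    obtain ⟨u, hu, hmem⟩ := concat_traj (G := G) (x := x) L P hL1 hP0 hPL hPe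
    refine ⟨u, hu, ?_⟩
    rw [Metric.dense_iff]
    intro z r hr
    obtain ⟨j, hj⟩ := Metric.denseRange_iff.1 hq z (r/2) (by linarith)
    obtain ⟨m, hm⟩ := exists_nat_one_div_lt (show (0:ℝ) < r/2 by linarith)
    set k := e.symm (j, m) with hk
    have hek : e k = (j, m) := Equiv.apply_symm_apply e (j, m)
    have h1 : dist (q j) (y k) < 1 / ((m : ℝ) + 1) := by
      have hh := hydist k
      rw [hek] at hh
      exact hh
    have h2 : dist z (y k) < r := by
      calc dist z (y k) ≤ dist z (q j) + dist (q j) (y k) := dist_triangle _ _ _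
        _ < r/2 + 1/((m:ℝ)+1) := add_lt_add hj h1
        _ < r/2 + r/2 := by linarith
        _ = r := by ring
    have hy' : y k ∈ Set.range u := by
      have hh := hmem k (J k) (hJL k)
      rwa [show P k (J k) = y k from hPJ k] at hh
    exact ⟨y k, Metric.mem_ball.2 (by rw [dist_comm] at h2; exact h2), hy'⟩

/-- if `x ∉ trans₂(G)` then `[x]_G` is not dense; consequently if
`[x]_G` is dense then `[x]_G ⊆ trans₂(G)`. -/
theorem stmt10 [MetricSpace X] [CompactSpace X]
    (G : Set (X × X)) (hGc : IsClosed G) (hGne : G.Nonempty) :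
    (∀ x : X, x ∉ trans2 G → ¬ Dense (eqClass G x)) ∧
    (∀ x : X, Dense (eqClass G x) → eqClass G x ⊆ trans2 G) := by
  constructor
  · intro x hx hd
    exact hx (dense_class_trans2 G hGne x hd)
  · intro x hd y hy
    have h := eqClass_eq hy
    exact dense_class_trans2 G hGne y (h ▸ hd)
end

section
/- Let (X, G) be a CR-dynamical system and k ∈ {0, 1}. Then the system (X, G) is k-transitive if, and only if, trans_k(G) is a dense G_δ subset of X. -/
open Set Topology

variable {X : Type*}

/-- The system `(X, G)` is `0`-transitive. -/
def SysTrans0 [TopologicalSpace X] (G : Set (X × X)) : Prop :=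
  ∀ U V : Set X, IsOpen U → U.Nonempty → IsOpen V → V.Nonempty →
    ∃ x ∈ U, ∃ n : ℕ, (GPow G n x).Nonempty ∧ GPow G n x ⊆ V

/-- The system `(X, G)` is `1`-transitive. -/
def SysTrans1 [TopologicalSpace X] (G : Set (X × X)) : Prop :=
  ∀ U V : Set X, IsOpen U → U.Nonempty → IsOpen V → V.Nonempty →
    ∃ x ∈ U, Legal G x ∧ ∀ u : ℕ → X, IsTraj G x u → (Set.range u ∩ V).Nonempty

section AuxLemmas

lemma traj_mem_gpow {G : Set (X × X)} {x : X} {u : ℕ → X} (hu : IsTraj G x u) (n : ℕ) :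
    u n ∈ GPow G n x := ⟨u, hu.1, rfl, fun i _ => hu.2 i⟩

lemma legal_of_no_deadend {G : Set (X × X)} (hne : ∀ x : X, ∃ y, (x, y) ∈ G) (x : X) :
    Legal G x := by
  refine ⟨fun n => Nat.rec x (fun _ p => (hne p).choose) n, rfl, fun n => ?_⟩
  exact (hne _).choose_spec

variable [MetricSpace X] [CompactSpace X]

lemma isClosed_eval_image {K : Set (ℕ → X)} (hK : IsClosed K) :
    IsClosed ((fun p : ℕ → X => p 0) '' K) :=
  ((hK.isCompact).image (continuous_apply 0)).isClosed

omit [CompactSpace X] in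
lemma isClosed_edges {G : Set (X × X)} (hGc : IsClosed G) (n : ℕ) :
    IsClosed {p : ℕ → X | ∀ i < n, (p i, p (i + 1)) ∈ G} := by
  have : {p : ℕ → X | ∀ i < n, (p i, p (i + 1)) ∈ G}
      = ⋂ (i : ℕ) (_ : i < n), (fun p : ℕ → X => (p i, p (i + 1))) ⁻¹' G := by
    ext p; simp [Set.mem_iInter]
  rw [this]
  exact isClosed_iInter fun i => isClosed_iInter fun _ =>
    hGc.preimage ((continuous_apply i).prodMk (continuous_apply (i + 1)))

lemma isOpen_gpow_subset {G : Set (X × X)} (hGc : IsClosed G) {U : Set X} (hU : IsOpen U)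
    (n : ℕ) : IsOpen {x | GPow G n x ⊆ U} := by
  have h2 : IsClosed {p : ℕ → X | p n ∉ U} := by
    have h3 : IsClosed ((fun p : ℕ → X => p n) ⁻¹' Uᶜ) :=
      IsClosed.preimage (continuous_apply n) hU.isClosed_compl
    exact h3
  have hK : IsClosed {p : ℕ → X | (∀ i < n, (p i, p (i + 1)) ∈ G) ∧ p n ∉ U} :=
    (isClosed_edges hGc n).inter h2
  rw [← isClosed_compl_iff]
  have heq : {x | GPow G n x ⊆ U}ᶜ
      = (fun p : ℕ → X => p 0) '' {p | (∀ i < n, (p i, p (i + 1)) ∈ G) ∧ p n ∉ U} := by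
    ext x
    simp only [mem_compl_iff, mem_setOf_eq, mem_image]
    constructor
    · intro h
      rw [Set.not_subset] at h
      obtain ⟨y, ⟨p, hp0, hpn, hpe⟩, hyU⟩ := h
      exact ⟨p, ⟨hpe, hpn ▸ hyU⟩, hp0⟩
    · rintro ⟨p, ⟨hpe, hpn⟩, hp0⟩
      rw [Set.not_subset]
      exact ⟨p n, ⟨p, hp0, rfl, hpe⟩, hpn⟩
  rw [heq]
  exact isClosed_eval_image hK

lemma isOpen_hits {G : Set (X × X)} (hGc : IsClosed G) {V : Set X} (hV : IsOpen V) (N : ℕ) :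
    IsOpen {x | ∀ p : ℕ → X, p 0 = x → (∀ i < N, (p i, p (i + 1)) ∈ G) → ∃ j ≤ N, p j ∈ V} := by
  have hK : IsClosed {p : ℕ → X | (∀ i < N, (p i, p (i + 1)) ∈ G) ∧ ∀ j ≤ N, p j ∉ V} := by
    refine (isClosed_edges hGc N).inter ?_
    show IsClosed {p : ℕ → X | ∀ j ≤ N, p j ∉ V}
    have heq2 : {p : ℕ → X | ∀ j ≤ N, p j ∉ V}
        = ⋂ (j : ℕ) (_ : j ≤ N), (fun p : ℕ → X => p j) ⁻¹' Vᶜ := by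
      ext p; simp [Set.mem_iInter]
    rw [heq2]
    refine isClosed_iInter fun j => isClosed_iInter fun _ => ?_
    exact IsClosed.preimage (continuous_apply j) hV.isClosed_compl
  rw [← isClosed_compl_iff]
  have heq : {x | ∀ p : ℕ → X, p 0 = x → (∀ i < N, (p i, p (i + 1)) ∈ G) → ∃ j ≤ N, p j ∈ V}ᶜ
      = (fun p : ℕ → X => p 0) ''
        {p : ℕ → X | (∀ i < N, (p i, p (i + 1)) ∈ G) ∧ ∀ j ≤ N, p j ∉ V} := by
    ext x
    simp only [mem_compl_iff, mem_setOf_eq, mem_image, not_forall]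
    constructor
    · rintro ⟨p, hp0, hpe, hj⟩
      push_neg at hj
      exact ⟨p, ⟨hpe, hj⟩, hp0⟩
    · rintro ⟨p, ⟨hpe, hj⟩, hp0⟩
      refine ⟨p, hp0, hpe, ?_⟩
      push_neg
      exact hj
  rw [heq]
  exact isClosed_eval_image hK

/-- If every trajectory of `x` meets the open set `V`, then by compactness there is a
uniform bound `N` such that every path of length `N` from `x` meets `V`. -/
lemma exists_hits_of_all_traj_meet {G : Set (X × X)} (hGc : IsClosed G) {V : Set X}
    (hV : IsOpen V) {x : X}
    (h : ∀ u : ℕ → X, IsTraj G x u → (Set.range u ∩ V).Nonempty) :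
    ∃ N, ∀ p : ℕ → X, p 0 = x → (∀ i < N, (p i, p (i + 1)) ∈ G) → ∃ j ≤ N, p j ∈ V := by
  by_contra hc
  push_neg at hc
  set K : ℕ → Set (ℕ → X) := fun N =>
    {p | p 0 = x ∧ (∀ i < N, (p i, p (i + 1)) ∈ G) ∧ ∀ j ≤ N, p j ∉ V} with hKdef
  have hKcl : ∀ N, IsClosed (K N) := by
    intro N
    refine (isClosed_eq (continuous_apply 0) continuous_const).inter
      ((isClosed_edges hGc N).inter ?_)
    show IsClosed {p : ℕ → X | ∀ j ≤ N, p j ∉ V}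
    have heq2 : {p : ℕ → X | ∀ j ≤ N, p j ∉ V}
        = ⋂ (j : ℕ) (_ : j ≤ N), (fun p : ℕ → X => p j) ⁻¹' Vᶜ := by
      ext p; simp [Set.mem_iInter]
    rw [heq2]
    refine isClosed_iInter fun j => isClosed_iInter fun _ => ?_
    exact IsClosed.preimage (continuous_apply j) hV.isClosed_compl
  have hKne : ∀ N, (K N).Nonempty := by
    intro N
    obtain ⟨p, hp0, hpe, hj⟩ := hc N
    exact ⟨p, hp0, hpe, hj⟩
  have hKmono : ∀ N, K (N + 1) ⊆ K N := by
    rintro N p ⟨hp0, hpe, hj⟩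
    exact ⟨hp0, fun i hi => hpe i (Nat.lt_succ_of_lt hi),
      fun j hjN => hj j (Nat.le_succ_of_le hjN)⟩
  obtain ⟨u, hu⟩ := IsCompact.nonempty_iInter_of_sequence_nonempty_isCompact_isClosed K
    hKmono hKne ((hKcl 0).isCompact) hKcl
  simp only [Set.mem_iInter] at hu
  have hutraj : IsTraj G x u :=
    ⟨(hu 0).1, fun n => (hu (n + 1)).2.1 n (Nat.lt_succ_self n)⟩
  obtain ⟨y, hyr, hyV⟩ := h u hutraj
  obtain ⟨j, rfl⟩ := hyr
  exact (hu j).2.2 j le_rfl hyV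

lemma isOpen_deadend {G : Set (X × X)} (hGc : IsClosed G) :
    IsOpen {x : X | ∀ y, (x, y) ∉ G} := by
  have heq : {x : X | ∀ y, (x, y) ∉ G} = (Prod.fst '' G)ᶜ := by
    ext x
    simp only [mem_setOf_eq, mem_compl_iff, mem_image, not_exists, not_and]
    constructor
    · rintro h ⟨a, b⟩ hab rfl
      exact h b hab
    · intro h y hy
      exact h (x, y) hy rfl
  rw [heq, isOpen_compl_iff]
  exact ((hGc.isCompact).image continuous_fst).isClosed

lemma no_deadend_of_sysTrans0 {G : Set (X × X)} (hGc : IsClosed G) (hGne : G.Nonempty)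
    (h : SysTrans0 G) (x₀ : X) : ∃ y, (x₀, y) ∈ G := by
  by_contra hx₀
  push_neg at hx₀
  set D := {x : X | ∀ y, (x, y) ∉ G} with hDdef
  have hDo : IsOpen D := isOpen_deadend hGc
  have hx₀D : x₀ ∈ D := hx₀
  by_cases hb : ∃ b ∈ D, b ≠ x₀
  · obtain ⟨b, hbD, hbne⟩ := hb
    have hr : (0 : ℝ) < dist b x₀ := dist_pos.mpr hbne
    obtain ⟨x, hxU, n, hne', hsub⟩ :=
      h (D ∩ Metric.ball x₀ (dist b x₀ / 2)) (D ∩ Metric.ball b (dist b x₀ / 2))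
        (hDo.inter Metric.isOpen_ball)
        ⟨x₀, hx₀D, Metric.mem_ball_self (by linarith)⟩
        (hDo.inter Metric.isOpen_ball)
        ⟨b, hbD, Metric.mem_ball_self (by linarith)⟩
    obtain ⟨y, hy⟩ := hne'
    obtain ⟨p, hp0, hpn, hpe⟩ := hy
    rcases Nat.eq_zero_or_pos n with hn | hn
    · subst hn
      have hyx : y = x := by rw [← hpn, hp0]
      have hyV := hsub ⟨p, hp0, hpn, hpe⟩
      rw [hyx] at hyV
      have h1 : dist x x₀ < dist b x₀ / 2 := hxU.2
      have h2 : dist x b < dist b x₀ / 2 := hyV.2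
      have h3 := dist_triangle b x x₀
      rw [dist_comm b x] at h3
      linarith
    · have := hpe 0 hn
      rw [hp0] at this
      exact hxU.1 (p 1) this
  · push_neg at hb
    by_cases hX : ∃ c : X, c ≠ x₀
    · obtain ⟨c, hcne⟩ := hX
      obtain ⟨x, hxD, n, hne', hsub⟩ :=
        h D ({x₀}ᶜ) hDo ⟨x₀, hx₀D⟩ isOpen_compl_singleton ⟨c, hcne⟩
      have hxx : x = x₀ := hb x hxD
      obtain ⟨y, hy⟩ := hne'
      obtain ⟨p, hp0, hpn, hpe⟩ := hy
      rcases Nat.eq_zero_or_pos n with hn | hn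
      · subst hn
        have hyx : y = x := by rw [← hpn, hp0]
        have := hsub ⟨p, hp0, hpn, hpe⟩
        rw [hyx, hxx] at this
        exact this rfl
      · have := hpe 0 hn
        rw [hp0, hxx] at this
        exact hx₀ (p 1) this
    · push_neg at hX
      obtain ⟨⟨a, c⟩, hac⟩ := hGne
      have ha : a = x₀ := hX a
      rw [ha] at hac
      exact hx₀ c hac

lemma no_deadend_of_sysTrans1 {G : Set (X × X)} (hGc : IsClosed G)
    (h : SysTrans1 G) (x₀ : X) : ∃ y, (x₀, y) ∈ G := by
  by_contra hx₀
  push_neg at hx₀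
  obtain ⟨x, hxD, ⟨u, hu⟩, -⟩ :=
    h {x : X | ∀ y, (x, y) ∉ G} univ (isOpen_deadend hGc) ⟨x₀, hx₀⟩ isOpen_univ
      ⟨x₀, mem_univ x₀⟩
  have := hu.2 0
  rw [hu.1] at this
  exact hxD (u 1) this

end AuxLemmas

/-- for `k ∈ {0,1}`, `(X, G)` is `k`-transitive iff `transₖ(G)` is a
dense Gδ subset of `X`. -/
theorem stmt19 [MetricSpace X] [CompactSpace X]
    (G : Set (X × X)) (hGc : IsClosed G) (hGne : G.Nonempty) :
    (SysTrans0 G ↔ Dense (trans0 G) ∧ IsGδ (trans0 G)) ∧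
    (SysTrans1 G ↔ Dense (trans1 G) ∧ IsGδ (trans1 G)) := by
  obtain ⟨b, hbc, hbne, hbasis⟩ := TopologicalSpace.exists_countable_basis X
  haveI : Countable ↥b := hbc.to_subtype
  have hbnonempty : ∀ i : ↥b, (i : Set X).Nonempty := fun i =>
    Set.nonempty_iff_ne_empty.mpr (fun h => hbne (h ▸ i.2))
  constructor
  · constructor
    · intro h
      have hnd : ∀ x : X, ∃ y, (x, y) ∈ G := no_deadend_of_sysTrans0 hGc hGne h
      have hleg : ∀ x : X, Legal G x := legal_of_no_deadend hnd
      set D : ↥b → Set X := fun i => {x | ∃ n, GPow G n x ⊆ (i : Set X)} with hDdef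
      have hDo : ∀ i, IsOpen (D i) := by
        intro i
        have : D i = ⋃ n, {x | GPow G n x ⊆ (i : Set X)} := by
          ext x; simp [hDdef]
        rw [this]
        exact isOpen_iUnion fun n => isOpen_gpow_subset hGc (hbasis.isOpen i.2) n
      have hDd : ∀ i, Dense (D i) := by
        intro i
        rw [dense_iff_inter_open]
        intro U hUo hUne
        obtain ⟨x, hxU, n, -, hsub⟩ := h U i hUo hUne (hbasis.isOpen i.2) (hbnonempty i)
        exact ⟨x, hxU, n, hsub⟩
      have heq : trans0 G = ⋂ i, D i := by
        ext x
        constructor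
        · rintro ⟨-, ht⟩
          rw [Set.mem_iInter]
          intro i
          exact ht i (hbasis.isOpen i.2) (hbnonempty i)
        · intro hx
          rw [Set.mem_iInter] at hx
          refine ⟨hleg x, fun U hUo hUne => ?_⟩
          obtain ⟨a, ha⟩ := hUne
          obtain ⟨v, hvb, -, hvU⟩ := hbasis.exists_subset_of_mem_open ha hUo
          obtain ⟨n, hn⟩ := hx ⟨v, hvb⟩
          exact ⟨n, hn.trans hvU⟩
      rw [heq]
      exact ⟨dense_iInter_of_isOpen hDo hDd, IsGδ.iInter fun i => (hDo i).isGδ⟩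
    · rintro ⟨hd, -⟩
      intro U V hUo hUne hVo hVne
      obtain ⟨x, hxt, hxU⟩ := hd.exists_mem_open hUo hUne
      obtain ⟨⟨u, hu⟩, ht⟩ := hxt
      obtain ⟨n, hn⟩ := ht V hVo hVne
      exact ⟨x, hxU, n, ⟨u n, traj_mem_gpow hu n⟩, hn⟩
  · constructor
    · intro h
      have hnd : ∀ x : X, ∃ y, (x, y) ∈ G := no_deadend_of_sysTrans1 hGc h
      have hleg : ∀ x : X, Legal G x := legal_of_no_deadend hnd
      set O : ↥b → Set X := fun i =>
        {x | ∃ N, ∀ p : ℕ → X, p 0 = x → (∀ j < N, (p j, p (j + 1)) ∈ G) →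
          ∃ j ≤ N, p j ∈ (i : Set X)} with hOdef
      have hOo : ∀ i, IsOpen (O i) := by
        intro i
        have : O i = ⋃ N, {x | ∀ p : ℕ → X, p 0 = x → (∀ j < N, (p j, p (j + 1)) ∈ G) →
            ∃ j ≤ N, p j ∈ (i : Set X)} := by
          ext x; simp [hOdef]
        rw [this]
        exact isOpen_iUnion fun N => isOpen_hits hGc (hbasis.isOpen i.2) N
      have hOd : ∀ i, Dense (O i) := by
        intro i
        rw [dense_iff_inter_open]
        intro U hUo hUne
        obtain ⟨x, hxU, -, hmeets⟩ := h U i hUo hUne (hbasis.isOpen i.2) (hbnonempty i)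
        exact ⟨x, hxU, exists_hits_of_all_traj_meet hGc (hbasis.isOpen i.2) hmeets⟩
      have heq : trans1 G = ⋂ i, O i := by
        ext x
        constructor
        · rintro ⟨-, ht⟩
          rw [Set.mem_iInter]
          intro i
          refine exists_hits_of_all_traj_meet hGc (hbasis.isOpen i.2) ?_
          intro u hu
          obtain ⟨y, hyi, hyr⟩ :=
            (ht u hu).inter_open_nonempty i (hbasis.isOpen i.2) (hbnonempty i)
          exact ⟨y, hyr, hyi⟩
        · intro hx
          rw [Set.mem_iInter] at hx
          refine ⟨hleg x, fun u hu => ?_⟩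
          rw [dense_iff_inter_open]
          intro U hUo hUne
          obtain ⟨a, ha⟩ := hUne
          obtain ⟨v, hvb, -, hvU⟩ := hbasis.exists_subset_of_mem_open ha hUo
          obtain ⟨N, hN⟩ := hx ⟨v, hvb⟩
          obtain ⟨j, -, hjv⟩ := hN u hu.1 (fun i _ => hu.2 i)
          exact ⟨u j, hvU hjv, mem_range_self j⟩
      rw [heq]
      exact ⟨dense_iInter_of_isOpen hOo hOd, IsGδ.iInter fun i => (hOo i).isGδ⟩
    · rintro ⟨hd, -⟩
      intro U V hUo hUne hVo hVne
      obtain ⟨x, hxt, hxU⟩ := hd.exists_mem_open hUo hUne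
      refine ⟨x, hxU, hxt.1, fun u hu => ?_⟩
      obtain ⟨y, hyV, hyr⟩ := (hxt.2 u hu).inter_open_nonempty V hVo hVne
      exact ⟨y, hyr, hyV⟩
end
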